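/- arXiv:2503.21052 — 4 statements merged into one kernel-verified Lean document; each statement's English description precedes it below -/
import Mathlib

section
/- Every cohypergraph of uniformity ℓ ≥ 3 is disperse. -/
open Finset

/-- An `ℓ`-uniform hypergraph (given by its edge set `E`) is disperse if every
`(ℓ+1)`-set of vertices induces `0`, `1`, `ℓ` or `ℓ+1` edges. -/
def Disperse {V : Type*} [DecidableEq V] (ℓ : ℕ) (E : Finset (Finset V)) : Prop :=
  ∀ X : Finset V, X.card = ℓ + 1 →
    (E.filter (· ⊆ X)).card = 0 ∨ (E.filter (· ⊆ X)).card = 1 ∨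
    (E.filter (· ⊆ X)).card = ℓ ∨ (E.filter (· ⊆ X)).card = ℓ + 1

/-- Edge set of the link of a vertex `v`: all `(ℓ-1)`-sets `e` with `e ∪ {v} ∈ E`. -/
def linkEdges {V : Type*} [DecidableEq V] (E : Finset (Finset V)) (v : V) :
    Finset (Finset V) :=
  (E.filter (fun e => v ∈ e)).image (fun e => e.erase v)

/-- `A` and `B` are connected by a tight walk in the `k`-uniform hypergraph with
edge set `E`: there is a sequence of edges, consecutive ones sharing at least
`k - 1` vertices, whose first edge contains `A` and last edge contains `B`. -/
def TightConn {V : Type*} [DecidableEq V] (k : ℕ) (E : Finset (Finset V))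
    (A B : Finset V) : Prop :=
  ∃ es : List (Finset V), ∃ h : es ≠ [],
    (∀ e ∈ es, e ∈ E) ∧ es.Chain' (fun a b => k - 1 ≤ (a ∩ b).card) ∧
    A ⊆ es.head h ∧ B ⊆ es.getLast h

/-- `IsCohypergraph ℓ E W`: the `ℓ`-uniform hypergraph induced on the vertex set
`W` by the edge set `E` is a cohypergraph. -/
inductive IsCohypergraph {V : Type*} [DecidableEq V] (ℓ : ℕ) (E : Finset (Finset V)) :
    Finset V → Prop
  | single (v : V) : IsCohypergraph ℓ E {v}
  | join (X Y : Finset V) : X.Nonempty → Y.Nonempty → Disjoint X Y →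
      IsCohypergraph ℓ E X → IsCohypergraph ℓ E Y →
      ((∀ e : Finset V, e.card = ℓ → e ⊆ X ∪ Y → (e ∩ X).Nonempty →
          (e ∩ Y).Nonempty → e ∈ E) ∨
       (∀ e : Finset V, e.card = ℓ → e ⊆ X ∪ Y → (e ∩ X).Nonempty →
          (e ∩ Y).Nonempty → e ∉ E)) →
      IsCohypergraph ℓ E (X ∪ Y)

/-- every cohypergraph of uniformity `ℓ ≥ 3` is disperse. -/
theorem cohypergraph_is_disperse {V : Type*} [DecidableEq V] (ℓ : ℕ) (hℓ : 3 ≤ ℓ)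
    (E : Finset (Finset V)) (W : Finset V)
    (hE : ∀ e ∈ E, e.card = ℓ ∧ e ⊆ W) (hco : IsCohypergraph ℓ E W) :
    ∀ X : Finset V, X ⊆ W → X.card = ℓ + 1 →
      (E.filter (· ⊆ X)).card = 0 ∨ (E.filter (· ⊆ X)).card = 1 ∨
      (E.filter (· ⊆ X)).card = ℓ ∨ (E.filter (· ⊆ X)).card = ℓ + 1 := by
  have hcard : ∀ e ∈ E, e.card = ℓ := fun e he => (hE e he).1
  clear hE
  induction hco with
  | single v =>
    intro X hX hXcard
    have := card_le_card hX
    simp only [card_singleton] at this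
    omega
  | join A B hA hB hdis hcoA hcoB hall ihA ihB =>
    intro X hXsub hXcard
    by_cases hXA : (X ∩ A).Nonempty
    swap
    · apply ihB X _ hXcard
      intro x hx
      rcases mem_union.1 (hXsub hx) with h | h
      · exact absurd ⟨x, mem_inter.2 ⟨hx, h⟩⟩ hXA
      · exact h
    by_cases hXB : (X ∩ B).Nonempty
    swap
    · apply ihA X _ hXcard
      intro x hx
      rcases mem_union.1 (hXsub hx) with h | h
      · exact h
      · exact absurd ⟨x, mem_inter.2 ⟨hx, h⟩⟩ hXB
    -- main case: X meets both A and B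
    have hunion : (X ∩ A) ∪ (X ∩ B) = X := by
      rw [← inter_union_distrib_left, inter_eq_left.2 hXsub]
    have hdisXAB : Disjoint (X ∩ A) (X ∩ B) :=
      hdis.mono inter_subset_right inter_subset_right
    have hsum : (X ∩ A).card + (X ∩ B).card = ℓ + 1 := by
      rw [← card_union_of_disjoint hdisXAB, hunion, hXcard]
    have hApos : 1 ≤ (X ∩ A).card := card_pos.2 hXA
    have hBpos : 1 ≤ (X ∩ B).card := card_pos.2 hXB
    have key : ∀ f : Finset V, f ⊆ X → f.card = ℓ →
        ¬((f ∩ A).Nonempty ∧ (f ∩ B).Nonempty) → f = X ∩ A ∨ f = X ∩ B := by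
      intro f hfX hfc hnc
      by_cases hfA : (f ∩ A).Nonempty
      · left
        have hfB : ¬ (f ∩ B).Nonempty := fun h => hnc ⟨hfA, h⟩
        have hsub : f ⊆ X ∩ A := by
          intro x hx
          refine mem_inter.2 ⟨hfX hx, ?_⟩
          rcases mem_union.1 (hXsub (hfX hx)) with h | h
          · exact h
          · exact absurd ⟨x, mem_inter.2 ⟨hx, h⟩⟩ hfB
        exact eq_of_subset_of_card_le hsub (by omega)
      · right
        have hsub : f ⊆ X ∩ B := by
          intro x hx
          refine mem_inter.2 ⟨hfX hx, ?_⟩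
          rcases mem_union.1 (hXsub (hfX hx)) with h | h
          · exact absurd ⟨x, mem_inter.2 ⟨hx, h⟩⟩ hfA
          · exact h
        exact eq_of_subset_of_card_le hsub (by omega)
    have hmemF : ∀ f, f ∈ E.filter (· ⊆ X) ↔ f ∈ E ∧ f ⊆ X := by
      intro f; simp [mem_filter]
    rcases hall with hall | hnone
    · -- all crossing sets are edges
      have hFP : E.filter (· ⊆ X) ⊆ X.powersetCard ℓ := by
        intro f hf
        rw [hmemF] at hf
        exact mem_powersetCard.2 ⟨hf.2, hcard f hf.1⟩
      have hPcard : (X.powersetCard ℓ).card = ℓ + 1 := by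
        rw [card_powersetCard, hXcard, Nat.choose_succ_self_right]
      have hdiff : (X.powersetCard ℓ \ E.filter (· ⊆ X)).card ≤ 1 := by
        rw [card_le_one]
        intro f hf g hg
        have hf' := mem_sdiff.1 hf
        have hg' := mem_sdiff.1 hg
        obtain ⟨hfX, hfc⟩ := mem_powersetCard.1 hf'.1
        obtain ⟨hgX, hgc⟩ := mem_powersetCard.1 hg'.1
        have hfk : f = X ∩ A ∨ f = X ∩ B := by
          refine key f hfX hfc ?_
          rintro ⟨h1, h2⟩
          exact hf'.2 ((hmemF f).2 ⟨hall f hfc (hfX.trans hXsub) h1 h2, hfX⟩)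
        have hgk : g = X ∩ A ∨ g = X ∩ B := by
          refine key g hgX hgc ?_
          rintro ⟨h1, h2⟩
          exact hg'.2 ((hmemF g).2 ⟨hall g hgc (hgX.trans hXsub) h1 h2, hgX⟩)
        rcases hfk with hf1 | hf1 <;> rcases hgk with hg1 | hg1
        · rw [hf1, hg1]
        · exfalso; rw [hf1] at hfc; rw [hg1] at hgc; omega
        · exfalso; rw [hf1] at hfc; rw [hg1] at hgc; omega
        · rw [hf1, hg1]
      have := card_sdiff_add_card_eq_card hFP
      have hle : (E.filter (· ⊆ X)).card ≤ ℓ + 1 := hPcard ▸ card_le_card hFP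
      omega
    · -- no crossing set is an edge
      have hle1 : (E.filter (· ⊆ X)).card ≤ 1 := by
        rw [card_le_one]
        intro f hf g hg
        obtain ⟨hfE, hfX⟩ := (hmemF f).1 hf
        obtain ⟨hgE, hgX⟩ := (hmemF g).1 hg
        have hfc := hcard f hfE
        have hgc := hcard g hgE
        have hfk : f = X ∩ A ∨ f = X ∩ B := by
          refine key f hfX hfc ?_
          rintro ⟨h1, h2⟩
          exact hnone f hfc (hfX.trans hXsub) h1 h2 hfE
        have hgk : g = X ∩ A ∨ g = X ∩ B := by
          refine key g hgX hgc ?_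
          rintro ⟨h1, h2⟩
          exact hnone g hgc (hgX.trans hXsub) h1 h2 hgE
        rcases hfk with hf1 | hf1 <;> rcases hgk with hg1 | hg1
        · rw [hf1, hg1]
        · exfalso; rw [hf1] at hfc; rw [hg1] at hgc; omega
        · exfalso; rw [hf1] at hfc; rw [hg1] at hgc; omega
        · rw [hf1, hg1]
      omega
end

section
/- Let ℓ ≥ 3 and let G be a disperse ℓ-uniform hypergraph on n vertices such that every tight component C of G satisfies |V(C)| ≤ m. Then α(G) ≥ ((ℓ−1)/ℓ)·(n/m)^{1/(ℓ−1)}. -/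
open Finset

theorem arith_aux (r s n m : ℕ) (hr : 2 ≤ r) (hm : 1 ≤ m)
    (h : n ≤ s + s.choose r * m) :
    ((r : ℝ) / ((r:ℝ) + 1)) * (((n : ℝ) / m) ^ ((1 : ℝ) / (r : ℝ))) ≤ s := by
  have hr0 : (0:ℝ) < (r:ℝ) := by exact_mod_cast (by omega : 0 < r)
  have hm0 : (0:ℝ) < (m:ℝ) := by exact_mod_cast hm
  rcases Nat.eq_zero_or_pos s with hs | hs
  · subst hs
    have hch : Nat.choose 0 r = 0 := Nat.choose_eq_zero_of_lt (by omega)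
    rw [hch] at h
    have hn : n = 0 := by omega
    subst hn
    simp [Real.zero_rpow (inv_ne_zero hr0.ne' : ((r:ℝ))⁻¹ ≠ 0)]
  · have hnat : n ≤ 2 * s ^ r * m := by
      have h1 : s ≤ s ^ r := Nat.le_self_pow (by omega) s
      have h2 : s.choose r ≤ s ^ r := Nat.choose_le_pow s r
      calc n ≤ s + s.choose r * m := h
        _ ≤ s ^ r * m + s ^ r * m := by
            have : s ≤ s ^ r * m := le_trans h1 (Nat.le_mul_of_pos_right _ (by omega))
            exact Nat.add_le_add this (Nat.mul_le_mul_right m h2)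
        _ = 2 * s ^ r * m := by ring
    have hdiv : (n:ℝ) / m ≤ 2 * (s:ℝ) ^ r := by
      rw [div_le_iff₀ hm0]
      exact_mod_cast hnat
    have h2le : (2:ℝ) ≤ (((r:ℝ)+1)/r) ^ r := by
      have hb := one_add_mul_le_pow (a := 1/(r:ℝ))
        (le_trans (by norm_num : (-2:ℝ) ≤ 0) (by positivity)) r
      have he : 1 + (r:ℝ) * (1/(r:ℝ)) = 2 := by rw [mul_one_div_cancel hr0.ne']; norm_num
      have he2 : (1 + 1/(r:ℝ)) = ((r:ℝ)+1)/r := by field_simp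
      rw [he, he2] at hb
      exact hb
    have hkey : (n:ℝ) / m ≤ ((((r:ℝ)+1)/r) * s) ^ r := by
      calc (n:ℝ)/m ≤ 2 * (s:ℝ)^r := hdiv
        _ ≤ (((r:ℝ)+1)/r)^r * (s:ℝ)^r := by
            apply mul_le_mul_of_nonneg_right h2le (by positivity)
        _ = ((((r:ℝ)+1)/r) * s)^r := (mul_pow _ _ _).symm
    set c : ℝ := (((r:ℝ)+1)/r) * s with hc
    have hc0 : 0 ≤ c := by positivity
    have hrpow : ((n:ℝ)/m) ^ ((1:ℝ)/r) ≤ c := by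
      have := Real.rpow_le_rpow (by positivity) hkey (by positivity : (0:ℝ) ≤ 1/(r:ℝ))
      calc ((n:ℝ)/m) ^ ((1:ℝ)/r) ≤ (c ^ r) ^ ((1:ℝ)/r) := this
        _ = c := by
            rw [← Real.rpow_natCast c r, ← Real.rpow_mul hc0,
              mul_one_div_cancel hr0.ne', Real.rpow_one]
    calc ((r:ℝ)/((r:ℝ)+1)) * (((n:ℝ)/m) ^ ((1:ℝ)/r))
        ≤ ((r:ℝ)/((r:ℝ)+1)) * c := by
          apply mul_le_mul_of_nonneg_left hrpow (by positivity)
      _ = s := by rw [hc]; field_simp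

/-- if all tight components of a disperse hypergraph span at most
`m` vertices, then the independence number is large. -/
theorem small_components_large_independent_set {V : Type*} [DecidableEq V] [Fintype V]
    (ℓ m : ℕ) (hℓ : 3 ≤ ℓ)
    (E : Finset (Finset V)) (hunif : ∀ e ∈ E, e.card = ℓ) (hdisp : Disperse ℓ E)
    (hcomp : ∀ A : Finset V, A.card = ℓ - 1 →
      ∃ U : Finset V, U.card ≤ m ∧
        ∀ B : Finset V, B.card = ℓ - 1 → (B = A ∨ TightConn ℓ E A B) → B ⊆ U) :
    ∃ S : Finset V, (∀ e ∈ E, ¬ e ⊆ S) ∧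
      ((ℓ : ℝ) - 1) / ℓ * (((Fintype.card V : ℝ) / m) ^ ((1 : ℝ) / ((ℓ : ℝ) - 1)))
        ≤ S.card := by
  classical
  have hℓR : (3:ℝ) ≤ (ℓ:ℝ) := by exact_mod_cast hℓ
  by_cases hm : m = 0
  · refine ⟨∅, ?_, ?_⟩
    · intro e he hsub
      have h1 := hunif e he
      rw [Finset.subset_empty] at hsub
      rw [hsub, Finset.card_empty] at h1
      omega
    · have hne : (((ℓ:ℝ) - 1))⁻¹ ≠ 0 := inv_ne_zero (by intro h; linarith)
      simp [hm, Real.zero_rpow hne]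
  · have hm1 : 1 ≤ m := Nat.one_le_iff_ne_zero.mpr hm
    have hUex : ∀ A : Finset V, ∃ U : Finset V, A.card = ℓ - 1 →
        U.card ≤ m ∧ ∀ B : Finset V, B.card = ℓ - 1 →
          (B = A ∨ TightConn ℓ E A B) → B ⊆ U := by
      intro A
      by_cases hA : A.card = ℓ - 1
      · obtain ⟨U, h1, h2⟩ := hcomp A hA
        exact ⟨U, fun _ => ⟨h1, h2⟩⟩
      · exact ⟨∅, fun h => absurd h hA⟩
    choose U hU using hUex
    set bad : Finset V → Finset V :=
      fun S => S ∪ (S.powersetCard (ℓ-1)).biUnion U with hbaddef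
    set I : Finset (Finset V) := Finset.univ.filter (fun S => ∀ e ∈ E, ¬ e ⊆ S) with hIdef
    have hIne : I.Nonempty := by
      refine ⟨∅, Finset.mem_filter.mpr ⟨Finset.mem_univ _, ?_⟩⟩
      intro e he hsub
      have h1 := hunif e he
      rw [Finset.subset_empty] at hsub
      rw [hsub, Finset.card_empty] at h1
      omega
    obtain ⟨S, hSI, hSmax⟩ := I.exists_max_image Finset.card hIne
    have hSind : ∀ e ∈ E, ¬ e ⊆ S := (Finset.mem_filter.mp hSI).2
    refine ⟨S, hSind, ?_⟩
    have hbadS : bad S = Finset.univ := by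
      by_contra hne
      obtain ⟨v, hv⟩ : ∃ v, v ∉ bad S := by
        by_contra h
        push_neg at h
        exact hne (Finset.eq_univ_iff_forall.mpr h)
      have hvS : v ∉ S := fun h => hv (Finset.mem_union_left _ h)
      have hins : ∀ e ∈ E, ¬ e ⊆ insert v S := by
        intro e he hsub
        by_cases hveE : v ∈ e
        · have hecard := hunif e he
          have hA : (e.erase v).card = ℓ - 1 := by
            rw [Finset.card_erase_of_mem hveE, hecard]
          have hAS : e.erase v ⊆ S := by
            intro x hx
            have hxe := Finset.mem_of_mem_erase hx
            have hxv := Finset.ne_of_mem_erase hx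
            rcases Finset.mem_insert.mp (hsub hxe) with h | h
            · exact absurd h hxv
            · exact h
          obtain ⟨u, hu⟩ : (e.erase v).Nonempty := by
            rw [← Finset.card_pos, hA]; omega
          have huv : u ≠ v := Finset.ne_of_mem_erase hu
          have hue : u ∈ e := Finset.mem_of_mem_erase hu
          have hB : (e.erase u).card = ℓ - 1 := by
            rw [Finset.card_erase_of_mem hue, hecard]
          have htc : TightConn ℓ E (e.erase v) (e.erase u) := by
            refine ⟨[e], by simp, ?_, ?_, ?_, ?_⟩
            · simpa using he
            · exact List.isChain_singleton e
            · simpa using Finset.erase_subset v e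
            · simpa using Finset.erase_subset u e
          have hBU : e.erase u ⊆ U (e.erase v) :=
            ((hU (e.erase v) hA).2) (e.erase u) hB (Or.inr htc)
          have hvU : v ∈ U (e.erase v) := hBU (Finset.mem_erase.mpr ⟨huv.symm, hveE⟩)
          exact hv (Finset.mem_union_right _ (Finset.mem_biUnion.mpr
            ⟨e.erase v, Finset.mem_powersetCard.mpr ⟨hAS, hA⟩, hvU⟩))
        · apply hSind e he
          intro x hx
          rcases Finset.mem_insert.mp (hsub hx) with h | h
          · exact absurd (h ▸ hx) hveE
          · exact h
      have hmem : insert v S ∈ I := Finset.mem_filter.mpr ⟨Finset.mem_univ _, hins⟩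
      have hle := hSmax _ hmem
      rw [Finset.card_insert_of_notMem hvS] at hle
      omega
    have hcount : Fintype.card V ≤ S.card + S.card.choose (ℓ-1) * m := by
      have h1 : Fintype.card V = (bad S).card := by rw [hbadS, Finset.card_univ]
      rw [h1]
      calc (bad S).card ≤ S.card + ((S.powersetCard (ℓ-1)).biUnion U).card :=
            Finset.card_union_le _ _
        _ ≤ S.card + ∑ A ∈ S.powersetCard (ℓ-1), (U A).card :=
            Nat.add_le_add_left (Finset.card_biUnion_le) _
        _ ≤ S.card + (S.powersetCard (ℓ-1)).card * m := by
            apply Nat.add_le_add_left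
            have := Finset.sum_le_card_nsmul (S.powersetCard (ℓ-1))
              (fun A => (U A).card) m ?_
            · simpa using this
            · intro A hA
              exact (hU A (Finset.mem_powersetCard.mp hA).2).1
        _ = S.card + S.card.choose (ℓ-1) * m := by rw [Finset.card_powersetCard]
    have harith := arith_aux (ℓ-1) S.card (Fintype.card V) m (by omega) hm1 hcount
    have hc1 : ((ℓ-1 : ℕ) : ℝ) = (ℓ:ℝ) - 1 := by
      have h1 : 1 ≤ ℓ := by omega
      push_cast [h1]
      ring
    rw [hc1] at harith
    have hc2 : (ℓ:ℝ) - 1 + 1 = (ℓ:ℝ) := by ring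
    rw [hc2] at harith
    exact harith
end

section
/- Let G be a disperse ℓ-uniform hypergraph (ℓ ≥ 3) and let X, Y ⊆ V(G) be disjoint sets such that no edge of G has exactly ℓ−1 vertices in X and 1 vertex in Y. Let A ⊆ X ∪ Y with |A| = ℓ−1 and let i = |A ∩ Y| ≥ 1. Then the number of edges of G containing A, with exactly ℓ−i vertices in X and i vertices in Y, is less than 2^{i−1}. -/
open Finset

lemma sum_filter_card_comm' {V : Type*} [DecidableEq V] (s t : Finset V)
    (r : V → V → Prop) [DecidableRel r] :
    ∑ a ∈ s, (t.filter (fun b => r a b)).card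
      = ∑ b ∈ t, (s.filter (fun a => r a b)).card := by
  simp only [Finset.card_filter]
  rw [Finset.sum_comm]

lemma crossing_aux {V : Type*} [DecidableEq V] (ℓ : ℕ) (hℓ : 3 ≤ ℓ)
    (E : Finset (Finset V)) (hunif : ∀ e ∈ E, e.card = ℓ) (hdisp : Disperse ℓ E)
    (X Y : Finset V) (hXY : Disjoint X Y)
    (hno : ∀ e ∈ E, ¬ ((e ∩ X).card = ℓ - 1 ∧ (e ∩ Y).card = 1)) :
    ∀ i : ℕ, 1 ≤ i → ∀ A : Finset V, A ⊆ X ∪ Y → A.card = ℓ - 1 → (A ∩ Y).card = i →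
    (E.filter (fun e => A ⊆ e ∧ (e ∩ X).card = ℓ - i ∧ (e ∩ Y).card = i)).card
      < 2 ^ (i - 1) := by
  intro i
  induction i with
  | zero => omega
  | succ n ih =>
    intro _ A hA hAcard hAY
    -- basic facts
    have hiℓ : n + 1 ≤ ℓ - 1 := by
      have : (A ∩ Y).card ≤ A.card := card_le_card inter_subset_left
      omega
    have hsplit : (A ∩ X).card + (A ∩ Y).card = A.card := by
      rw [← card_union_of_disjoint (hXY.mono inter_subset_right inter_subset_right),
        ← inter_union_distrib_left, inter_eq_left.mpr hA]
    have hAX : (A ∩ X).card = ℓ - 1 - (n + 1) := by omega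
    set F := E.filter (fun e => A ⊆ e ∧ (e ∩ X).card = ℓ - (n + 1) ∧
      (e ∩ Y).card = n + 1) with hF
    set S := X.filter (fun v => v ∉ A ∧ insert v A ∈ E) with hS
    -- F is the image of S under inserting into A
    have hFS : F = S.image (fun v => insert v A) := by
      ext e
      simp only [hF, hS, mem_filter, mem_image]
      constructor
      · rintro ⟨heE, hAe, heX, heY⟩
        have hecard : e.card = ℓ := hunif e heE
        have h1 : (e \ A).card = 1 := by rw [card_sdiff_of_subset hAe]; omega
        obtain ⟨v, hv⟩ := card_eq_one.mp h1
        have hvA : v ∉ A := (mem_sdiff.mp (hv ▸ mem_singleton_self v)).2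
        have hve : v ∈ e := (mem_sdiff.mp (hv ▸ mem_singleton_self v)).1
        have he : e = insert v A := by
          ext w
          constructor
          · intro hw
            by_cases hwA : w ∈ A
            · exact mem_insert_of_mem hwA
            · have : w ∈ e \ A := mem_sdiff.mpr ⟨hw, hwA⟩
              rw [hv, mem_singleton] at this
              exact this ▸ mem_insert_self v A
          · intro hw
            rcases mem_insert.mp hw with rfl | hw
            · exact hve
            · exact hAe hw
        have hvX : v ∈ X := by
          by_contra hvX
          have : e ∩ X = A ∩ X := by
            rw [he, insert_inter_of_notMem hvX]
          rw [this] at heX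
          omega
        exact ⟨v, ⟨hvX, hvA, he ▸ heE⟩, he.symm⟩
      · rintro ⟨v, ⟨hvX, hvA, hvE⟩, rfl⟩
        have hvY : v ∉ Y := disjoint_left.mp hXY hvX
        refine ⟨hvE, subset_insert v A, ?_, ?_⟩
        · rw [insert_inter_of_mem hvX, card_insert_of_notMem (fun h => hvA (inter_subset_left h))]
          omega
        · rw [insert_inter_of_notMem hvY]
          omega
    have hFcard : F.card = S.card := by
      rw [hFS]
      apply card_image_of_injOn
      intro v hv w hw hvw
      simp only [hS, coe_filter, Set.mem_setOf_eq] at hv hw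
      have hvw' : insert v A = insert w A := hvw
      have : v ∈ insert w A := hvw' ▸ mem_insert_self v A
      rcases mem_insert.mp this with h | h
      · exact h
      · exact absurd h hv.2.1
    rcases Nat.eq_zero_or_pos n with rfl | hn1
    · -- base case i = 1 : no such edges by hno
      have : F = ∅ := by
        rw [eq_empty_iff_forall_notMem]
        intro e he
        simp only [hF, mem_filter] at he
        exact hno e he.1 ⟨by simpa using he.2.2.1, he.2.2.2⟩
      simp [this]
    -- main case : i = n + 1, n ≥ 1
    by_contra hcon
    push_neg at hcon
    simp only [Nat.add_sub_cancel] at hcon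
    have hp : 1 ≤ 2 ^ (n - 1) := Nat.one_le_two_pow
    have h2n : 2 ^ n = 2 * 2 ^ (n - 1) := by
      conv_lhs => rw [show n = (n - 1) + 1 by omega]
      ring
    have hScard : 2 ^ n ≤ S.card := hFcard ▸ hcon
    have hSne : S.Nonempty := card_pos.mp (by omega)
    obtain ⟨u, hu⟩ := hSne
    have huX : u ∈ X := (mem_filter.mp hu).1
    have huA : u ∉ A := (mem_filter.mp hu).2.1
    have huE : insert u A ∈ E := (mem_filter.mp hu).2.2
    have huY : u ∉ Y := disjoint_left.mp hXY huX
    set S' := S.erase u with hS'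
    have hS'card : S'.card = S.card - 1 := card_erase_of_mem hu
    set R : V → V → Prop := fun a v => insert v (insert u (A.erase a)) ∈ E with hR
    have hRdec : DecidableRel R := fun a v => by unfold R; infer_instance
    -- lower bound : every v ∈ S' relates to at least n elements of A ∩ Y
    have hlow : ∀ v ∈ S', n ≤ ((A ∩ Y).filter (fun a => R a v)).card := by
      intro v hv
      have hvu : v ≠ u := (mem_erase.mp hv).1
      have hvS := (mem_erase.mp hv).2
      have hvX : v ∈ X := (mem_filter.mp hvS).1
      have hvA : v ∉ A := (mem_filter.mp hvS).2.1
      have hvE : insert v A ∈ E := (mem_filter.mp hvS).2.2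
      set T := insert u (insert v A) with hT
      have hTcard : T.card = ℓ + 1 := by
        rw [hT, card_insert_of_notMem (by simp [huA, Ne.symm hvu]),
          card_insert_of_notMem hvA]
        omega
      have huAT : insert u A ⊆ T := by
        rw [hT, Finset.insert_comm]
        exact subset_insert _ _
      have hvAT : insert v A ⊆ T := subset_insert _ _
      have hne : insert u A ≠ insert v A := by
        intro h
        have : u ∈ insert v A := h ▸ mem_insert_self u A
        rcases mem_insert.mp this with h' | h'
        · exact hvu h'.symm
        · exact huA h'
      have h2 : 1 < (E.filter (· ⊆ T)).card := by
        rw [one_lt_card]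
        exact ⟨insert u A, mem_filter.mpr ⟨huE, huAT⟩,
          insert v A, mem_filter.mpr ⟨hvE, hvAT⟩, hne⟩
      have hdW : ℓ ≤ (E.filter (· ⊆ T)).card := by
        rcases hdisp T hTcard with h | h | h | h <;> omega
      set W := T.filter (fun x => T.erase x ∈ E) with hW
      have hsub : E.filter (· ⊆ T) ⊆ W.image (T.erase ·) := by
        intro e he
        have heE : e ∈ E := (mem_filter.mp he).1
        have heT : e ⊆ T := (mem_filter.mp he).2
        have h1 : (T \ e).card = 1 := by
          rw [card_sdiff_of_subset heT, hunif e heE]; omega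
        obtain ⟨x, hx⟩ := card_eq_one.mp h1
        have hxT : x ∈ T := (mem_sdiff.mp (hx ▸ mem_singleton_self x)).1
        have hxe : x ∉ e := (mem_sdiff.mp (hx ▸ mem_singleton_self x)).2
        have hee : T.erase x = e := by
          ext w
          constructor
          · intro hw
            rcases mem_erase.mp hw with ⟨hne', hwT⟩
            by_contra hwe
            exact hne' (mem_singleton.mp (hx ▸ mem_sdiff.mpr ⟨hwT, hwe⟩))
          · intro hw
            exact mem_erase.mpr ⟨fun h => hxe (h ▸ hw), heT hw⟩
        exact mem_image.mpr ⟨x, mem_filter.mpr ⟨hxT, hee ▸ heE⟩, hee⟩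
      have hWcard : ℓ ≤ W.card :=
        le_trans hdW (le_trans (card_le_card hsub) card_image_le)
      have hWT : W ⊆ T := filter_subset _ _
      have hTW : (T \ W).card ≤ 1 := by
        rw [card_sdiff_of_subset hWT]; omega
      set G := (A ∩ Y).filter (fun a => T.erase a ∈ E) with hG
      have hbad : (A ∩ Y) \ G ⊆ T \ W := by
        intro a ha
        rcases mem_sdiff.mp ha with ⟨haAY, haG⟩
        have haA : a ∈ A := inter_subset_left haAY
        have haT : a ∈ T := huAT (mem_insert_of_mem haA)
        refine mem_sdiff.mpr ⟨haT, fun hw => haG ?_⟩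
        exact mem_filter.mpr ⟨haAY, (mem_filter.mp hw).2⟩
      have hGsub : G ⊆ A ∩ Y := filter_subset _ _
      have hGcard : n ≤ G.card := by
        have h1 : ((A ∩ Y) \ G).card ≤ 1 := le_trans (card_le_card hbad) hTW
        rw [card_sdiff_of_subset hGsub] at h1
        have := card_le_card hGsub
        omega
      -- rewrite G as the R-filter
      have hGR : G = (A ∩ Y).filter (fun a => R a v) := by
        apply filter_congr
        intro a ha
        have haA : a ∈ A := inter_subset_left ha
        have haY : a ∈ Y := inter_subset_right ha
        have hau : a ≠ u := fun h => huY (h ▸ haY)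
        have hav : a ≠ v := fun h => (disjoint_right.mp hXY haY) (h ▸ hvX)
        have : T.erase a = insert v (insert u (A.erase a)) := by
          rw [hT, erase_insert_of_ne (Ne.symm hau), erase_insert_of_ne (Ne.symm hav),
            Finset.insert_comm]
        rw [this]
      rw [← hGR]
      exact hGcard
    -- upper bound : every a ∈ A ∩ Y relates to fewer than 2^(n-1) elements of S'
    have hup : ∀ a ∈ A ∩ Y, (S'.filter (fun v => R a v)).card ≤ 2 ^ (n - 1) - 1 := by
      intro a ha
      have haA : a ∈ A := inter_subset_left ha
      have haY : a ∈ Y := inter_subset_right ha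
      have haX : a ∉ X := disjoint_right.mp hXY haY
      have hau : a ≠ u := fun h => huY (h ▸ haY)
      set B := insert u (A.erase a) with hB
      have huB : u ∉ A.erase a := fun h => huA (erase_subset _ _ h)
      have hB1 : B ⊆ X ∪ Y :=
        insert_subset (mem_union_left _ huX) ((erase_subset _ _).trans hA)
      have hB2 : B.card = ℓ - 1 := by
        rw [hB, card_insert_of_notMem huB, card_erase_of_mem haA]
        omega
      have hBY : B ∩ Y = (A ∩ Y).erase a := by
        rw [hB, insert_inter_of_notMem huY, erase_inter]
      have hB3 : (B ∩ Y).card = n := by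
        rw [hBY, card_erase_of_mem ha, hAY]
        omega
      have hBX : B ∩ X = insert u (A ∩ X) := by
        rw [hB, insert_inter_of_mem huX, erase_inter, erase_eq_of_notMem
          (fun h => haX (inter_subset_right h))]
      have hIH := ih hn1 B hB1 hB2 hB3
      have hmap : (S'.filter (fun v => R a v)).card ≤
          (E.filter (fun e => B ⊆ e ∧ (e ∩ X).card = ℓ - n ∧ (e ∩ Y).card = n)).card := by
        apply card_le_card_of_injOn (fun v => insert v B)
        · intro v hv
          rcases mem_filter.mp hv with ⟨hvS', hvR⟩
          have hvu : v ≠ u := (mem_erase.mp hvS').1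
          have hvS := (mem_erase.mp hvS').2
          have hvX : v ∈ X := (mem_filter.mp hvS).1
          have hvA : v ∉ A := (mem_filter.mp hvS).2.1
          have hvY : v ∉ Y := disjoint_left.mp hXY hvX
          have hvB : v ∉ B := by
            rw [hB]
            simp only [mem_insert, mem_erase]
            push_neg
            exact ⟨hvu, fun _ => hvA⟩
          have hvBX : v ∉ insert u (A ∩ X) := by
            simp only [mem_insert]
            push_neg
            exact ⟨hvu, fun h => hvA (inter_subset_left h)⟩
          refine mem_filter.mpr ⟨hvR, subset_insert _ _, ?_, ?_⟩
          · rw [insert_inter_of_mem hvX, hBX, card_insert_of_notMem hvBX,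
              card_insert_of_notMem (fun h => huA (inter_subset_left h))]
            omega
          · rw [insert_inter_of_notMem hvY, hB3]
        · intro v hv w hw hvw
          simp only [coe_filter, Set.mem_setOf_eq] at hv hw
          have hvB : v ∉ B := by
            have hvu : v ≠ u := (mem_erase.mp hv.1).1
            have hvA : v ∉ A := (mem_filter.mp (mem_erase.mp hv.1).2).2.1
            rw [hB]; simp only [mem_insert, mem_erase]; push_neg
            exact ⟨hvu, fun _ => hvA⟩
          have hwB : w ∉ B := by
            have hwu : w ≠ u := (mem_erase.mp hw.1).1
            have hwA : w ∉ A := (mem_filter.mp (mem_erase.mp hw.1).2).2.1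
            rw [hB]; simp only [mem_insert, mem_erase]; push_neg
            exact ⟨hwu, fun _ => hwA⟩
          have hvw' : insert v B = insert w B := hvw
          have : v ∈ insert w B := hvw' ▸ mem_insert_self v B
          rcases mem_insert.mp this with h | h
          · exact h
          · exact absurd h hvB
      have := hmap.trans_lt hIH
      omega
    -- double counting
    have hcount : S'.card * n ≤ (n + 1) * (2 ^ (n - 1) - 1) := by
      calc S'.card * n = ∑ _v ∈ S', n := by rw [sum_const, smul_eq_mul]
        _ ≤ ∑ v ∈ S', ((A ∩ Y).filter (fun a => R a v)).card := sum_le_sum hlow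
        _ = ∑ a ∈ A ∩ Y, (S'.filter (fun v => R a v)).card :=
            (sum_filter_card_comm' (A ∩ Y) S' R).symm
        _ ≤ ∑ _a ∈ A ∩ Y, (2 ^ (n - 1) - 1) := sum_le_sum hup
        _ = (n + 1) * (2 ^ (n - 1) - 1) := by rw [sum_const, smul_eq_mul, hAY]
    -- final arithmetic contradiction
    have hm : 2 ^ n - 1 ≤ S'.card := by omega
    obtain ⟨q, hq⟩ : ∃ q, 2 ^ (n - 1) = q + 1 := ⟨2 ^ (n - 1) - 1, by omega⟩
    have hfin : (2 * (q + 1) - 1) * n ≤ (n + 1) * q := by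
      calc (2 * (q + 1) - 1) * n = (2 ^ n - 1) * n := by rw [h2n, hq]
        _ ≤ S'.card * n := Nat.mul_le_mul_right n hm
        _ ≤ (n + 1) * (2 ^ (n - 1) - 1) := hcount
        _ = (n + 1) * q := by rw [hq]; simp
    have hfin' : (2 * q + 1) * n ≤ (n + 1) * q := by
      have h : 2 * (q + 1) - 1 = 2 * q + 1 := by omega
      rw [← h]; exact hfin
    nlinarith [hfin', hn1, Nat.le_mul_of_pos_left q hn1]

theorem crossing_edges_bound {V : Type*} [DecidableEq V] (ℓ : ℕ) (hℓ : 3 ≤ ℓ)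
    (E : Finset (Finset V)) (hunif : ∀ e ∈ E, e.card = ℓ) (hdisp : Disperse ℓ E)
    (X Y : Finset V) (hXY : Disjoint X Y)
    (hno : ∀ e ∈ E, ¬ ((e ∩ X).card = ℓ - 1 ∧ (e ∩ Y).card = 1))
    (A : Finset V) (hA : A ⊆ X ∪ Y) (hAcard : A.card = ℓ - 1)
    (i : ℕ) (hi : i = (A ∩ Y).card) (hi1 : 1 ≤ i) :
    (E.filter (fun e => A ⊆ e ∧ (e ∩ X).card = ℓ - i ∧ (e ∩ Y).card = i)).card
      < 2 ^ (i - 1) := by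
  exact crossing_aux ℓ hℓ E hunif hdisp X Y hXY hno i hi1 A hA hAcard hi.symm
end

section
/- Let G be a 3-uniform hypergraph on n vertices such that for every vertex v the link graph L(v) is a split graph. Then there exists U ⊆ V(G) with |U| ≥ n^{1/3} and a graph F on U such that for all distinct x, y, z ∈ U: {x,y,z} ∈ E(G) if and only if F has at least 2 edges among the pairs xy, xz, yz. -/
open Finset

/-!
Let `K v` be the clique side of a split partition of the link of `v`, and call `x ≠ y`
disagreeing if exactly one of `y ∈ K x`, `x ∈ K y` holds. On a set `U` without disagreeing
pairs, take `F x y := (y ∈ K x)`: a triple of `U` with two `F`-edges has a vertex seeing the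
other two on its clique side, so it is an edge, and a triple with at most one `F`-edge has a
vertex seeing the other two on its independent side, so it is not.

The disagreement graph is locally bipartite: comparing the link of `v` with the links of its
neighbours shows that the neighbours of `v` inside `K v` pairwise agree, and so do those
outside `K v`. A locally bipartite graph on `m ^ 2` vertices has an independent set of size `m`:
either a vertex has `2 m - 1` neighbours, `m` of which lie on one independent side, or we
delete a vertex together with its neighbourhood and recurse on the remaining `(m - 1) ^ 2`
vertices. Finally `n ≤ ⌊√n⌋ ^ 3` once `n ≥ 4`; smaller `n` are handled by sets of size at most
two, which carry no triples.
-/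

theorem Nat.le_sqrt_pow_three {n : ℕ} (hn : 4 ≤ n) : n ≤ Nat.sqrt n ^ 3 := by
  have hs : 2 ≤ n.sqrt := Nat.le_sqrt'.2 hn
  have hlt : n < (n.sqrt + 1) ^ 2 := Nat.lt_succ_sqrt' n
  nlinarith [Nat.mul_le_mul_right (n.sqrt ^ 2) hs, Nat.mul_le_mul_right n.sqrt hs]

namespace SimpleGraph

variable {V : Type*} {G : SimpleGraph V}

def IsLocallyBipartite (G : SimpleGraph V) : Prop :=
  ∀ v, ∃ A B : Set V, G.neighborSet v ⊆ A ∪ B ∧ G.IsIndepSet A ∧ G.IsIndepSet B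

theorem IsNIndepSet.insert [DecidableEq V] {n : ℕ} {s : Finset V} {v : V}
    (hs : G.IsNIndepSet n s) (h : ∀ b ∈ s, v ≠ b ∧ ¬G.Adj v b) :
    G.IsNIndepSet (n + 1) (insert v s) :=
  G.isNClique_compl.1 (((G.isNClique_compl).2 hs).insert fun b hb => (compl_adj G v b).2 (h b hb))

theorem IsIndepSet.exists_isNIndepSet_subset {A : Set V} (hA : G.IsIndepSet A) {S : Finset V}
    (hSA : ↑S ⊆ A) {n : ℕ} (hn : n ≤ #S) : ∃ T ⊆ S, G.IsNIndepSet n T := by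
  obtain ⟨T, hTS, rfl⟩ := exists_subset_card_eq hn
  exact ⟨T, hTS, ⟨hA.mono ((coe_subset.2 hTS).trans hSA), rfl⟩⟩

theorem IsLocallyBipartite.exists_isNIndepSet_of_subset_neighborSet (hG : G.IsLocallyBipartite)
    {v : V} {S : Finset V} (hS : ↑S ⊆ G.neighborSet v) {m : ℕ} (hm : 2 * m + 1 ≤ #S) :
    ∃ T ⊆ S, G.IsNIndepSet (m + 1) T := by
  classical
  obtain ⟨A, B, hAB, hA, hB⟩ := hG v
  have hcard_sum := card_filter_add_card_filter_not (s := S) (· ∈ A)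
  by_cases hcard : m + 1 ≤ #(S.filter (· ∈ A))
  · obtain ⟨T, hT, hTn⟩ := hA.exists_isNIndepSet_subset (fun x hx => (mem_filter.1 hx).2) hcard
    exact ⟨T, hT.trans (filter_subset _ _), hTn⟩
  · have hSB : ↑(S.filter (· ∉ A)) ⊆ B := fun x hx => by
      obtain ⟨hxS, hxA⟩ := mem_filter.1 hx
      exact (hAB (hS hxS)).resolve_left hxA
    obtain ⟨T, hT, hTn⟩ := hB.exists_isNIndepSet_subset hSB (n := m + 1) (by omega)
    exact ⟨T, hT.trans (filter_subset _ _), hTn⟩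

theorem IsLocallyBipartite.exists_isNIndepSet_of_sq_le_card [DecidableEq V]
    (hG : G.IsLocallyBipartite) : ∀ (m : ℕ) (S : Finset V), m ^ 2 ≤ #S → ∃ T ⊆ S, G.IsNIndepSet m T
  | 0, _, _ => ⟨∅, empty_subset _, ⟨by simp, rfl⟩⟩
  | m + 1, S, hS => by
    classical
    obtain ⟨v, hv⟩ : S.Nonempty := card_pos.1 (lt_of_lt_of_le (by positivity) hS)
    set N := (S.erase v).filter (G.Adj v)
    set R := (S.erase v).filter (¬G.Adj v ·)
    have hNR : #N + #R = #S - 1 := by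
      rw [card_filter_add_card_filter_not, card_erase_of_mem hv]
    by_cases hN : 2 * m + 1 ≤ #N
    · obtain ⟨T, hTN, hT⟩ := hG.exists_isNIndepSet_of_subset_neighborSet
        (fun x hx => (mem_filter.1 hx).2) hN
      exact ⟨T, hTN.trans ((filter_subset _ _).trans (erase_subset _ _)), hT⟩
    · obtain ⟨T, hTR, hT⟩ := hG.exists_isNIndepSet_of_sq_le_card m R (by
        have : (m + 1) ^ 2 = m ^ 2 + 2 * m + 1 := by ring
        omega)
      refine ⟨insert v T,
        insert_subset hv (hTR.trans ((filter_subset _ _).trans (erase_subset _ _))),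
        hT.insert fun b hb => ?_⟩
      obtain ⟨hbS, hvb⟩ := mem_filter.1 (hTR hb)
      exact ⟨(ne_of_mem_erase hbS).symm, hvb⟩

end SimpleGraph

section SplitLinks

variable {V : Type*}

def disagreementGraph (K : V → Finset V) : SimpleGraph V where
  Adj x y := ¬(y ∈ K x ↔ x ∈ K y)
  symm := ⟨fun _ _ h h' => h h'.symm⟩
  loopless := ⟨fun _ h => h Iff.rfl⟩

variable [DecidableEq V]

def IsMajorityOfGraphOn (E : Finset (Finset V)) (U : Finset V) : Prop :=
  ∃ F : V → V → Bool, (∀ x y, F x y = F y x) ∧ (∀ x, F x x = false) ∧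
    ∀ x ∈ U, ∀ y ∈ U, ∀ z ∈ U, x ≠ y → x ≠ z → y ≠ z →
      (({x, y, z} : Finset V) ∈ E ↔
        2 ≤ (if F x y then 1 else 0) + (if F x z then 1 else 0) + (if F y z then 1 else 0))

theorem isMajorityOfGraphOn_of_card_le_two (E : Finset (Finset V)) {U : Finset V}
    (hU : #U ≤ 2) : IsMajorityOfGraphOn E U := by
  refine ⟨fun _ _ => false, fun _ _ => rfl, fun _ => rfl, fun x hx y hy z hz hxy hxz hyz => ?_⟩
  have : #({x, y, z} : Finset V) ≤ #U := card_le_card (by simp [insert_subset_iff, hx, hy, hz])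
  rw [card_insert_of_notMem (by simp [hxy, hxz]), card_pair hyz] at this
  omega

/-- `K v` is the clique side of a split partition of the link of `v`; the independent side is
the rest of `V ∖ {v}`. -/
structure IsLinkSplitting (E : Finset (Finset V)) (K : V → Finset V) : Prop where
  clique : ∀ v, ∀ x ∈ K v, ∀ y ∈ K v, x ≠ y → ({v, x, y} : Finset V) ∈ E
  indep : ∀ v x y, x ≠ v → y ≠ v → x ≠ y → x ∉ K v → y ∉ K v → ({v, x, y} : Finset V) ∉ E

namespace IsLinkSplitting

variable {E : Finset (Finset V)} {K : V → Finset V}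

theorem mem_of_mem_of_notMem (h : IsLinkSplitting E K) {v a b : V} (ha : a ∈ K v) (hb : b ∈ K v)
    (hab : a ≠ b) (hav : a ≠ v) (hbv : b ≠ v) (hva : v ∉ K a) : b ∈ K a := by
  by_contra hba
  refine h.indep a b v hab.symm hav.symm hbv hba hva ?_
  rw [pair_comm b v, insert_comm a v]
  exact h.clique v a ha b hb hab

theorem notMem_of_notMem_of_mem (h : IsLinkSplitting E K) {v a b : V} (ha : a ∉ K v) (hb : b ∉ K v)
    (hab : a ≠ b) (hav : a ≠ v) (hbv : b ≠ v) (hva : v ∈ K a) : b ∉ K a := by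
  intro hba
  refine h.indep v a b hav hbv hab ha hb ?_
  rw [insert_comm]
  exact h.clique a v hva b hba hbv.symm

theorem not_adj_of_mem (h : IsLinkSplitting E K) {v a b : V}
    (hva : (disagreementGraph K).Adj v a) (hvb : (disagreementGraph K).Adj v b)
    (ha : a ∈ K v) (hb : b ∈ K v) (hab : a ≠ b) : ¬(disagreementGraph K).Adj a b := by
  have hav := ((disagreementGraph K).ne_of_adj hva).symm
  have hbv := ((disagreementGraph K).ne_of_adj hvb).symm
  have hva' : v ∉ K a := fun h' => hva (iff_of_true ha h')
  have hvb' : v ∉ K b := fun h' => hvb (iff_of_true hb h')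
  exact not_not.2 (iff_of_true (h.mem_of_mem_of_notMem ha hb hab hav hbv hva')
    (h.mem_of_mem_of_notMem hb ha hab.symm hbv hav hvb'))

theorem not_adj_of_notMem (h : IsLinkSplitting E K) {v a b : V}
    (hva : (disagreementGraph K).Adj v a) (hvb : (disagreementGraph K).Adj v b)
    (ha : a ∉ K v) (hb : b ∉ K v) (hab : a ≠ b) : ¬(disagreementGraph K).Adj a b := by
  have hav := ((disagreementGraph K).ne_of_adj hva).symm
  have hbv := ((disagreementGraph K).ne_of_adj hvb).symm
  have hva' : v ∈ K a := not_not.1 fun h' => hva (iff_of_false ha h')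
  have hvb' : v ∈ K b := not_not.1 fun h' => hvb (iff_of_false hb h')
  exact not_not.2 (iff_of_false (h.notMem_of_notMem_of_mem ha hb hab hav hbv hva')
    (h.notMem_of_notMem_of_mem hb ha hab.symm hbv hav hvb'))

theorem isLocallyBipartite_disagreementGraph (h : IsLinkSplitting E K) :
    (disagreementGraph K).IsLocallyBipartite := fun v =>
  ⟨_ ∩ {x | x ∈ K v}, _ ∩ {x | x ∉ K v}, fun x hx => (em (x ∈ K v)).imp (⟨hx, ·⟩) (⟨hx, ·⟩),
    fun _ ha _ hb hab => h.not_adj_of_mem ha.1 hb.1 ha.2 hb.2 hab,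
    fun _ ha _ hb hab => h.not_adj_of_notMem ha.1 hb.1 ha.2 hb.2 hab⟩

theorem isMajorityOfGraphOn_of_isIndepSet (h : IsLinkSplitting E K) {U : Finset V}
    (hU : (disagreementGraph K).IsIndepSet U) : IsMajorityOfGraphOn E U := by
  -- on `U` this is `y ∈ K x`; the other conjuncts make `F` symmetric and loopless everywhere
  refine ⟨fun x y => decide (x ≠ y ∧ y ∈ K x ∧ x ∈ K y), fun x y => ?_, fun x => by simp, ?_⟩
  · simp only [decide_eq_decide, ne_comm (a := x)]
    tauto
  intro x hx y hy z hz hxy hxz hyz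
  have agree : ∀ a ∈ U, ∀ b ∈ U, a ≠ b → (b ∈ K a ↔ a ∈ K b) :=
    fun a ha b hb hab => not_not.1 (hU ha hb hab)
  have gxy := agree x hx y hy hxy
  have gxz := agree x hx z hz hxz
  have gyz := agree y hy z hz hyz
  have eY : ({y, x, z} : Finset V) = {x, y, z} := insert_comm _ _ _
  have eZ : ({z, x, y} : Finset V) = {x, y, z} := by rw [insert_comm, pair_comm]
  have inX := fun hy hz => h.clique x y hy z hz hyz
  have inY := fun hx hz => h.clique y x hx z hz hxz
  have inZ := fun hx hy => h.clique z x hx y hy hxy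
  have outX := h.indep x y z hxy.symm hxz.symm hyz
  have outY := h.indep y x z hxy hyz.symm hxz
  have outZ := h.indep z x y hxz hyz hxy
  rw [eY] at inY outY
  rw [eZ] at inZ outZ
  simp only [decide_eq_true_eq, hxy, hxz, hyz, ne_eq, not_false_eq_true, true_and,
    and_iff_left_of_imp gxy.1, and_iff_left_of_imp gxz.1, and_iff_left_of_imp gyz.1]
  rw [← gxy] at inY outY
  rw [← gxz, ← gyz] at inZ outZ
  by_cases a : y ∈ K x <;> by_cases b : z ∈ K x <;> by_cases c : z ∈ K y <;>
    simp only [a, b, c, if_true, if_false] <;> norm_num <;>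
    solve_by_elim only [inX, inY, inZ, outX, outY, outZ, a, b, c]

theorem exists_card_le_pow_three_and_isMajorityOfGraphOn [Fintype V] (h : IsLinkSplitting E K) :
    ∃ U : Finset V, Fintype.card V ≤ #U ^ 3 ∧ IsMajorityOfGraphOn E U := by
  set n := Fintype.card V
  by_cases hn : 4 ≤ n
  · obtain ⟨U, -, hU⟩ := h.isLocallyBipartite_disagreementGraph.exists_isNIndepSet_of_sq_le_card
      (Nat.sqrt n) univ (by rw [card_univ]; exact Nat.sqrt_le' n)
    refine ⟨U, ?_, h.isMajorityOfGraphOn_of_isIndepSet hU.isIndepSet⟩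
    exact hU.card_eq ▸ Nat.le_sqrt_pow_three hn
  · obtain ⟨U, -, hU⟩ := exists_subset_card_eq (s := (univ : Finset V)) (n := min n 2) (by simp [n])
    refine ⟨U, ?_, isMajorityOfGraphOn_of_card_le_two E (by omega)⟩
    rw [hU]
    interval_cases n <;> simp

end IsLinkSplitting

end SplitLinks

theorem split_links_structure_general {V : Type*} [DecidableEq V] [Fintype V]
    (E : Finset (Finset V))
    (hsplit : ∀ v : V, ∃ K I : Finset V,
      K ∪ I = Finset.univ.erase v ∧ Disjoint K I ∧
      (∀ x ∈ K, ∀ y ∈ K, x ≠ y → ({v, x, y} : Finset V) ∈ E) ∧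
      (∀ x ∈ I, ∀ y ∈ I, x ≠ y → ({v, x, y} : Finset V) ∉ E)) :
    ∃ U : Finset V, (Fintype.card V : ℝ) ^ ((1 : ℝ) / 3) ≤ U.card ∧
      ∃ F : V → V → Bool, (∀ x y, F x y = F y x) ∧ (∀ x, F x x = false) ∧
        ∀ x ∈ U, ∀ y ∈ U, ∀ z ∈ U, x ≠ y → x ≠ z → y ≠ z →
          (({x, y, z} : Finset V) ∈ E ↔
            2 ≤ (if F x y then 1 else 0) + (if F x z then 1 else 0) +
                (if F y z then 1 else 0)) := by
  choose K I hKI _ hK hI using hsplit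
  have mem_I : ∀ v x, x ≠ v → x ∉ K v → x ∈ I v := fun v x hxv hxK =>
    (mem_union.1 ((hKI v).symm ▸ mem_erase.2 ⟨hxv, mem_univ x⟩)).resolve_left hxK
  have hE : IsLinkSplitting E K := ⟨hK, fun v x y hxv hyv hxy hxK hyK =>
    hI v x (mem_I v x hxv hxK) y (mem_I v y hyv hyK) hxy⟩
  obtain ⟨U, hn, hU⟩ := hE.exists_card_le_pow_three_and_isMajorityOfGraphOn
  refine ⟨U, ?_, hU⟩
  rw [one_div, Real.rpow_inv_le_iff_of_pos (by positivity) (by positivity) (by norm_num)]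
  exact_mod_cast hn

/-- 3-graphs with split links contain a large set realizing the
majority-of-a-graph construction. -/
theorem split_links_structure {V : Type*} [DecidableEq V] [Fintype V]
    (E : Finset (Finset V)) (hunif : ∀ e ∈ E, e.card = 3)
    (hsplit : ∀ v : V, ∃ K I : Finset V,
      K ∪ I = Finset.univ.erase v ∧ Disjoint K I ∧
      (∀ x ∈ K, ∀ y ∈ K, x ≠ y → ({v, x, y} : Finset V) ∈ E) ∧
      (∀ x ∈ I, ∀ y ∈ I, x ≠ y → ({v, x, y} : Finset V) ∉ E)) :
    ∃ U : Finset V, (Fintype.card V : ℝ) ^ ((1 : ℝ) / 3) ≤ U.card ∧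
      ∃ F : V → V → Bool, (∀ x y, F x y = F y x) ∧ (∀ x, F x x = false) ∧
        ∀ x ∈ U, ∀ y ∈ U, ∀ z ∈ U, x ≠ y → x ≠ z → y ≠ z →
          (({x, y, z} : Finset V) ∈ E ↔
            2 ≤ (if F x y then 1 else 0) + (if F x z then 1 else 0) +
                (if F y z then 1 else 0)) :=
  split_links_structure_general E hsplit
end
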